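/- Let R be a semilocal ring (R/rad(R) is left Artinian), q ∈ R, and I a left ideal of R. If I + Rq = R, then the coset I + q contains a unit of R. -/

import Mathlib

/-!
Let `J` be the Jacobson radical. The `R`-module `R ⧸ J` is artinian with zero radical, hence
semisimple of finite length, and right multiplication by `q` is an endomorphism `ρ` of it with
`Ī + range ρ = R ⧸ J`. If `P` is a complement of `K = ρ⁻¹(Ī)`, then `ρ` maps `P` isomorphically
onto a complement of `Ī`, so cancellation in semisimple modules of finite length gives `K ≅ Ī`.
Gluing such an isomorphism on `K` with `ρ` on `P` yields an automorphism `φ ≡ ρ` modulo `Ī`.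
Every `R`-linear endomorphism of `R ⧸ J` is a right multiplication, so `φ` is right
multiplication by a unit `u ≡ q` modulo `Ī`, and units lift modulo the Jacobson radical.
-/

open Submodule LinearMap

section

variable {R : Type*} [Ring R]

section Cancellation

variable {M N X Y Z S : Type*} [AddCommGroup M] [Module R M] [AddCommGroup N] [Module R N]
  [AddCommGroup X] [Module R X] [AddCommGroup Y] [Module R Y] [AddCommGroup Z] [Module R Z]
  [AddCommGroup S] [Module R S]

noncomputable def Submodule.equivMapOfDisjointKer (f : M →ₗ[R] N) {V : Submodule R M}
    (h : Disjoint V (ker f)) : V ≃ₗ[R] V.map f :=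
  .ofInjective (f ∘ₗ V.subtype)
      (by rwa [← ker_eq_bot, ker_comp, ← disjoint_iff_comap_eq_bot]) ≪≫ₗ
    .ofEq _ _ (by rw [range_comp, range_subtype])

theorem Submodule.equivMapOfDisjointKer_apply (f : M →ₗ[R] N) {V : Submodule R M}
    (h : Disjoint V (ker f)) (v : V) : (V.equivMapOfDisjointKer f h v : N) = f v :=
  rfl

noncomputable def LinearMap.quotRangeInrEquiv : ((X × S) ⧸ range (inr R X S)) ≃ₗ[R] X :=
  quotEquivOfEq _ _ (ker_fst R X S).symm ≪≫ₗ
    (LinearMap.fst R X S).quotKerEquivOfSurjective LinearMap.fst_surjective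

namespace IsSemisimpleModule

instance prod [IsSemisimpleModule R X] [IsSemisimpleModule R Y] :
    IsSemisimpleModule R (X × Y) := by
  have := IsSemisimpleModule.sup (.range (inl R X Y)) (.range (inr R X Y))
  rw [sup_range_inl_inr] at this
  exact .congr Submodule.topEquiv.symm

theorem nonempty_linearEquiv_prod_quotient [IsSemisimpleModule R M] (N : Submodule R M) :
    Nonempty (M ≃ₗ[R] N × (M ⧸ N)) :=
  have ⟨C, hC⟩ := exists_isCompl N
  ⟨(prodEquivOfIsCompl N C hC).symm ≪≫ₗ
    .prodCongr (.refl R N) (quotientEquivOfIsCompl N C hC).symm⟩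

theorem nonempty_quotient_linearEquiv_prod_of_disjoint [IsSemisimpleModule R M]
    {U V : Submodule R M} (h : Disjoint U V) :
    Nonempty ((M ⧸ U) ≃ₗ[R] V × (M ⧸ (U ⊔ V))) := by
  obtain ⟨f⟩ := nonempty_linearEquiv_prod_quotient (V.map U.mkQ)
  have hV : Disjoint V (ker U.mkQ) := by rwa [ker_mkQ, disjoint_comm]
  exact ⟨f ≪≫ₗ .prodCongr (V.equivMapOfDisjointKer U.mkQ hV).symm
    (quotientQuotientEquivQuotientSup U V)⟩

theorem nonempty_quotient_linearEquiv_of_disjoint [IsSemisimpleModule R M]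
    {U V : Submodule R M} (h : Disjoint U V) (e : U ≃ₗ[R] V) :
    Nonempty ((M ⧸ U) ≃ₗ[R] (M ⧸ V)) := by
  obtain ⟨f⟩ := nonempty_quotient_linearEquiv_prod_of_disjoint h
  obtain ⟨g⟩ := nonempty_quotient_linearEquiv_prod_of_disjoint h.symm
  exact ⟨f ≪≫ₗ .prodCongr e.symm (quotEquivOfEq _ _ (sup_comm U V)) ≪≫ₗ g.symm⟩

theorem nonempty_quotient_linearEquiv_of_isAtom [IsSemisimpleModule R M]
    {U V : Submodule R M} (hU : IsAtom U) (hV : IsAtom V) (e : U ≃ₗ[R] V) :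
    Nonempty ((M ⧸ U) ≃ₗ[R] (M ⧸ V)) := by
  obtain rfl | hne := eq_or_ne U V
  · exact ⟨.refl R _⟩
  · exact nonempty_quotient_linearEquiv_of_disjoint (hU.disjoint_of_ne hV hne) e

theorem nonempty_linearEquiv_of_prod_simple [IsSemisimpleModule R X] [IsSimpleModule R S]
    (e : (X × S) ≃ₗ[R] (Y × S)) : Nonempty (X ≃ₗ[R] Y) := by
  -- `X` and `Y` are the quotients of `X × S` by the simple submodules `S₀` and `S₁`.
  let S₀ := range (inr R X S)
  let S₁ := (range (inr R Y S)).map (e.symm : Y × S →ₗ[R] X × S)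
  let e₀ : S ≃ₗ[R] S₀ := .ofInjective _ inr_injective
  let e₁ : S ≃ₗ[R] S₁ := .ofInjective _ inr_injective ≪≫ₗ e.symm.submoduleMap _
  have hS₀ : IsAtom S₀ := isSimpleModule_iff_isAtom.mp (.congr e₀.symm)
  have hS₁ : IsAtom S₁ := isSimpleModule_iff_isAtom.mp (.congr e₁.symm)
  obtain ⟨f⟩ := nonempty_quotient_linearEquiv_of_isAtom hS₀ hS₁ (e₀.symm ≪≫ₗ e₁)
  have hS₁e : S₁.map (e : X × S →ₗ[R] Y × S) = range (inr R Y S) := (map_symm_eq_iff e).mp rfl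
  exact ⟨quotRangeInrEquiv.symm ≪≫ₗ f ≪≫ₗ Quotient.equiv _ _ e hS₁e ≪≫ₗ quotRangeInrEquiv⟩

theorem nonempty_linearEquiv_of_prod [IsSemisimpleModule R X] [IsSemisimpleModule R Z]
    (hZ : IsFiniteLength R Z) (e : (X × Z) ≃ₗ[R] (Y × Z)) : Nonempty (X ≃ₗ[R] Y) := by
  revert ‹IsSemisimpleModule R Z› e
  induction hZ generalizing X Y with
  | @of_subsingleton Z _ _ _ =>
    intro _ e
    have : Unique Z := uniqueOfSubsingleton 0
    exact ⟨LinearEquiv.prodUnique.symm ≪≫ₗ e ≪≫ₗ LinearEquiv.prodUnique⟩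
  | @of_simple_quotient Z _ _ N _ _ ih =>
    intro _ e
    obtain ⟨f⟩ := nonempty_linearEquiv_prod_quotient N
    let eX := (LinearEquiv.refl R X).prodCongr f ≪≫ₗ (LinearEquiv.prodAssoc R _ _ _).symm
    let eY := (LinearEquiv.refl R Y).prodCongr f ≪≫ₗ (LinearEquiv.prodAssoc R _ _ _).symm
    obtain ⟨g⟩ := nonempty_linearEquiv_of_prod_simple (eX.symm ≪≫ₗ e ≪≫ₗ eY)
    exact ih g

theorem nonempty_linearEquiv_of_isCompl [IsSemisimpleModule R M] [IsArtinian R M]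
    {A B C D : Submodule R M} (hAC : IsCompl A C) (hBD : IsCompl B D) (e : A ≃ₗ[R] B) :
    Nonempty (C ≃ₗ[R] D) :=
  have hA : IsFiniteLength R A :=
    (IsSemisimpleModule.finite_tfae.out 2 3).mp (isArtinian_submodule' A)
  nonempty_linearEquiv_of_prod hA <| .prodComm R _ _ ≪≫ₗ prodEquivOfIsCompl A C hAC ≪≫ₗ
    (prodEquivOfIsCompl B D hBD).symm ≪≫ₗ .prodComm R _ _ ≪≫ₗ .prodCongr (.refl R D) e.symm

end IsSemisimpleModule

end Cancellation

section StableRange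

variable {M : Type*} [AddCommGroup M] [Module R M]

theorem Submodule.isCompl_map_of_isCompl_comap {ρ : M →ₗ[R] M} {N P : Submodule R M}
    (h : N ⊔ range ρ = ⊤) (hP : IsCompl (N.comap ρ) P) : IsCompl N (P.map ρ) := by
  constructor
  · rw [disjoint_def]
    rintro _ hN ⟨p, hp, rfl⟩
    have : p ∈ N.comap ρ ⊓ P := ⟨hN, hp⟩
    rw [hP.inf_eq_bot, mem_bot] at this
    rw [this, map_zero]
  · rw [codisjoint_iff, eq_top_iff, ← h, range_eq_map, ← hP.sup_eq_top, Submodule.map_sup]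
    exact sup_le le_sup_left (sup_le ((map_comap_le ρ N).trans le_sup_left) le_sup_right)

theorem IsSemisimpleModule.exists_linearEquiv_sub_mem [IsSemisimpleModule R M] [IsArtinian R M]
    (ρ : M →ₗ[R] M) (N : Submodule R M) (h : N ⊔ range ρ = ⊤) :
    ∃ φ : M ≃ₗ[R] M, ∀ x, φ x - ρ x ∈ N := by
  obtain ⟨P, hP⟩ := exists_isCompl (N.comap ρ)
  have hker : Disjoint P (ker ρ) := hP.disjoint.symm.mono_right (ker_le_comap ρ)
  have hN := isCompl_map_of_isCompl_comap h hP
  let σ := P.equivMapOfDisjointKer ρ hker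
  obtain ⟨θ⟩ := nonempty_linearEquiv_of_isCompl hP.symm hN.symm σ
  let φ := (prodEquivOfIsCompl _ P hP).symm ≪≫ₗ θ.prodCongr σ ≪≫ₗ prodEquivOfIsCompl N _ hN
  refine ⟨φ, fun x => ?_⟩
  obtain ⟨⟨k, p⟩, rfl⟩ := (prodEquivOfIsCompl _ P hP).surjective x
  have hk : ρ k ∈ N := k.2
  simpa [φ, σ, equivMapOfDisjointKer_apply] using sub_mem (θ k).2 hk

end StableRange

section Jacobson

theorem Ring.isUnit_of_sub_one_mem_jacobson {x : R} (h : x - 1 ∈ Ring.jacobson R) :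
    IsUnit x := by
  rw [← Ideal.jacobson_bot] at h
  obtain ⟨s, hs⟩ := Ideal.exists_mul_sub_mem_of_sub_one_mem_jacobson x h
  rw [Ideal.mem_bot, sub_eq_zero] at hs
  have hs' : s - 1 ∈ Ideal.jacobson ⊥ := by
    have : s - 1 = -(s * (x - 1)) := by rw [mul_sub, hs, mul_one, neg_sub]
    exact this ▸ neg_mem (Ideal.mul_mem_left _ s h)
  obtain ⟨t, ht⟩ := Ideal.exists_mul_sub_mem_of_sub_one_mem_jacobson s hs'
  rw [Ideal.mem_bot, sub_eq_zero] at ht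
  exact ⟨⟨x, s, left_inv_eq_right_inv ht hs ▸ ht, hs⟩, rfl⟩

theorem Ring.isUnit_of_isUnit_mk_jacobson {x : R}
    (h : IsUnit (Ideal.Quotient.mk (Ring.jacobson R) x)) : IsUnit x := by
  obtain ⟨y, hy⟩ := Ideal.Quotient.mk_surjective (↑h.unit⁻¹ : R ⧸ Ring.jacobson R)
  have hxy : IsUnit (x * y) := isUnit_of_sub_one_mem_jacobson <| by
    rw [← Ideal.Quotient.eq, map_mul, hy, map_one, IsUnit.mul_val_inv]
  have hyx : IsUnit (y * x) := isUnit_of_sub_one_mem_jacobson <| by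
    rw [← Ideal.Quotient.eq, map_mul, hy, map_one, IsUnit.val_inv_mul]
  exact isUnit_iff_exists_and_exists.mpr
    ⟨⟨y * hxy.unit⁻¹, by rw [← mul_assoc, hxy.mul_val_inv]⟩,
      ⟨hyx.unit⁻¹ * y, by rw [mul_assoc, hyx.val_inv_mul]⟩⟩

end Jacobson

section Quotient

variable (I : Ideal R) [I.IsTwoSided]

theorem Ideal.Quotient.linearMap_apply_eq_mul (f : (R ⧸ I) →ₗ[R] R ⧸ I) (x : R ⧸ I) :
    f x = x * f 1 := by
  obtain ⟨r, rfl⟩ := Ideal.Quotient.mk_surjective x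
  have hr : Ideal.Quotient.mk I r = r • 1 := by
    show Submodule.Quotient.mk r = r • Submodule.Quotient.mk 1
    rw [← Submodule.Quotient.mk_smul, smul_eq_mul, mul_one]
  rw [hr, map_smul, smul_one_mul]

theorem Ideal.Quotient.isUnit_linearEquiv_apply_one (φ : (R ⧸ I) ≃ₗ[R] R ⧸ I) :
    IsUnit (φ 1) := by
  have h₁ := linearMap_apply_eq_mul I φ.toLinearMap (φ.symm 1)
  have h₂ := linearMap_apply_eq_mul I φ.symm.toLinearMap (φ 1)
  simp only [LinearEquiv.coe_coe, LinearEquiv.apply_symm_apply, LinearEquiv.symm_apply_apply]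
    at h₁ h₂
  exact isUnit_iff_exists_and_exists.mpr ⟨⟨_, h₂.symm⟩, ⟨_, h₁.symm⟩⟩

end Quotient

end

theorem bass_coset_contains_unit {R : Type*} [Ring R]
    (hsemilocal : IsArtinian R (R ⧸ (Ideal.jacobson (⊥ : Ideal R))))
    (q : R) (I : Ideal R) (h : I ⊔ Ideal.span {q} = ⊤) :
    ∃ i ∈ I, IsUnit (i + q) := by
  rw [Ideal.jacobson_bot] at hsemilocal
  set J := Ring.jacobson R
  have : IsSemisimpleModule R (R ⧸ J) :=
    (IsArtinian.isSemisimpleModule_iff_jacobson R _).mpr (Module.jacobson_quotient_jacobson R R)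
  have hspan : Submodule.map J.mkQ I ⊔ range (mulRight R (Ideal.Quotient.mk J q)) = ⊤ := by
    rw [eq_top_iff]
    rintro x -
    obtain ⟨r, rfl⟩ := J.mkQ_surjective x
    obtain ⟨i, hi, _, hq, rfl⟩ := mem_sup.mp (h ▸ mem_top : r ∈ I ⊔ Ideal.span {q})
    obtain ⟨a, rfl⟩ := Ideal.mem_span_singleton'.mp hq
    exact add_mem (mem_sup_left (mem_map_of_mem hi))
      (mem_sup_right (mem_range_self _ (Ideal.Quotient.mk J a)))
  obtain ⟨φ, hφ⟩ := IsSemisimpleModule.exists_linearEquiv_sub_mem _ _ hspan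
  obtain ⟨i, hi, hiφ⟩ := mem_map.mp (hφ 1)
  refine ⟨i, hi, Ring.isUnit_of_isUnit_mk_jacobson ?_⟩
  have hφ1 : Ideal.Quotient.mk J (i + q) = φ 1 := by
    rw [map_add]
    exact eq_sub_iff_add_eq.mp (hiφ.trans (by simp))
  exact hφ1 ▸ Ideal.Quotient.isUnit_linearEquiv_apply_one J φ
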